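/- Let (M_k) be any family of ℂ-linear maps on d^n × d^n complex matrices indexed by k ∈ (ℤ/dℤ)^n, let M̂_k be its randomized compilation, let m ≥ 1, and fix outcomes k_1, …, k_m ∈ (ℤ/dℤ)^n. Then for every d^n × d^n complex matrix ρ, the average over all α_1, …, α_m, β_1, …, β_m ∈ (ℤ/dℤ)^n (with α_0 = 0) of Tr[ (M_{k_m−α_m} ∘ 𝒵^{β_m} ∘ 𝒳^{α_{m−1}−α_m}) ∘ ⋯ ∘ (M_{k_1−α_1} ∘ 𝒵^{β_1} ∘ 𝒳^{α_0−α_1}) (ρ) ], i.e. d^{-2nm} times the sum over all such α, β, equals Tr[ M̂_{k_m} ∘ ⋯ ∘ M̂_{k_1}(ρ) ]. (This is the statement that the outcome probabilities of the instrument-benchmarking routine with ideal gates are governed by powers of the randomly compiled instrument.) -/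

import Mathlib

open scoped BigOperators
open Matrix

/-- Index set `(ℤ/dℤ)^n`. -/
abbrev QIdx (d n : ℕ) := Fin n → ZMod d

/-- `d^n × d^n` complex matrices, indexed by `(ℤ/dℤ)^n`. -/
abbrev QMat (d n : ℕ) := Matrix (QIdx d n) (QIdx d n) ℂ

/-- The character `χ_z(j) = exp(2πi (z·j) / d)`. -/
noncomputable def chi (d n : ℕ) (z j : QIdx d n) : ℂ :=
  Complex.exp (2 * Real.pi * Complex.I * ((∑ i, (z i).val * (j i).val : ℕ) : ℂ) / d)

/-- The Weyl operator `X^x`, acting by `X^x |j⟩ = |j + x⟩`. -/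
noncomputable def WX (d n : ℕ) (x : QIdx d n) : QMat d n :=
  Matrix.of fun a b => if a = b + x then (1 : ℂ) else 0

/-- The Weyl operator `Z^z`, acting by `Z^z |j⟩ = χ_z(j) |j⟩`. -/
noncomputable def WZ (d n : ℕ) (z : QIdx d n) : QMat d n :=
  Matrix.diagonal fun j => chi d n z j

/-- The generalized Pauli fidelities
`ν̃_{s,t}(M) = d^{-n} Σ_k χ_k(s−t)^* Tr((Z^t)† M_k(Z^s))`. -/
noncomputable def gpf (d n : ℕ) [NeZero d]
    (M : QIdx d n → (QMat d n →ₗ[ℂ] QMat d n)) (s t : QIdx d n) : ℂ :=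
  (1 / (d : ℂ) ^ n) *
    ∑ k : QIdx d n, (starRingEnd ℂ) (chi d n k (s - t)) * ((WZ d n t)ᴴ * M k (WZ d n s)).trace

/-- The randomized compilation
`M̂_k = d^{-3n} Σ_{a,b,x} 𝒳^x ∘ 𝒵^a ∘ M_{k−x} ∘ 𝒵^b ∘ 𝒳^{−x}`. -/
noncomputable def rc (d n : ℕ) [NeZero d]
    (M : QIdx d n → (QMat d n →ₗ[ℂ] QMat d n)) (k : QIdx d n) (ρ : QMat d n) : QMat d n :=
  (1 / (d : ℂ) ^ (3 * n)) •
    ∑ a : QIdx d n, ∑ b : QIdx d n, ∑ x : QIdx d n,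
      WX d n x * WZ d n a *
        (M (k - x) (WZ d n b * (WX d n (-x) * ρ * (WX d n (-x))ᴴ) * (WZ d n b)ᴴ)) *
        (WZ d n a)ᴴ * (WX d n x)ᴴ

/-- Sequential application of channels: `chain f ρ = f (m-1) (⋯ (f 0 ρ))`,
i.e. `f 0` is applied first. -/
def chain {α : Type*} {m : ℕ} (f : Fin m → α → α) (ρ : α) : α :=
  (List.ofFn f).foldl (fun σ g => g σ) ρ

set_option linter.unusedSectionVars false

variable {d n : ℕ} [NeZero d]

noncomputable def ed (d : ℕ) (a : ℕ) : ℂ := Complex.exp (2 * Real.pi * Complex.I * (a : ℂ) / d)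

lemma ed_mod (a : ℕ) : ed d a = ed d (a % d) := by
  have hd : (d : ℂ) ≠ 0 := Nat.cast_ne_zero.mpr (NeZero.ne d)
  conv_lhs => rw [← Nat.div_add_mod a d]
  unfold ed
  push_cast
  rw [show 2 * (Real.pi:ℂ) * Complex.I * ((d:ℂ) * (a/d : ℕ) + (a % d : ℕ)) / d
      = (a/d : ℕ) * (2 * Real.pi * Complex.I) + 2 * Real.pi * Complex.I * (a % d : ℕ) / d by
    field_simp]
  rw [Complex.exp_add, Complex.exp_nat_mul_two_pi_mul_I, one_mul]

lemma ed_congr {a b : ℕ} (h : a ≡ b [MOD d]) : ed d a = ed d b := by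
  rw [ed_mod a, ed_mod b, h]

lemma ed_add (a b : ℕ) : ed d (a + b) = ed d a * ed d b := by
  unfold ed
  rw [← Complex.exp_add]
  congr 1
  push_cast
  ring

lemma chi_eq_ed (z j : QIdx d n) : chi d n z j = ed d (∑ i, (z i).val * (j i).val) := rfl

lemma chi_add_right (z j u : QIdx d n) : chi d n z (j + u) = chi d n z j * chi d n z u := by
  rw [chi_eq_ed, chi_eq_ed, chi_eq_ed, ← ed_add]
  apply ed_congr
  rw [← Finset.sum_add_distrib]
  unfold Nat.ModEq
  rw [Finset.sum_nat_mod, Finset.sum_nat_mod _ _ (fun i => (z i).val * (j i).val + (z i).val * (u i).val)]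
  congr 1
  apply Finset.sum_congr rfl
  intro i _
  have h : ((j + u) i).val = ((j i).val + (u i).val) % d := by
    simp [Pi.add_apply, ZMod.val_add]
  rw [h, Nat.mul_mod, Nat.mod_mod_of_dvd _ dvd_rfl, ← Nat.mul_mod, mul_add]

lemma chi_add_left (z w j : QIdx d n) : chi d n (z + w) j = chi d n z j * chi d n w j := by
  rw [chi_eq_ed, chi_eq_ed, chi_eq_ed, ← ed_add]
  apply ed_congr
  rw [← Finset.sum_add_distrib]
  unfold Nat.ModEq
  rw [Finset.sum_nat_mod, Finset.sum_nat_mod _ _ (fun i => (z i).val * (j i).val + (w i).val * (j i).val)]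
  congr 1
  apply Finset.sum_congr rfl
  intro i _
  have h : ((z + w) i).val = ((z i).val + (w i).val) % d := by
    simp [Pi.add_apply, ZMod.val_add]
  rw [h, Nat.mul_mod, Nat.mod_mod_of_dvd _ dvd_rfl, ← Nat.mul_mod, add_mul]

lemma conj_chi_mul (z j : QIdx d n) : (starRingEnd ℂ) (chi d n z j) * chi d n z j = 1 := by
  unfold chi
  set N : ℕ := ∑ i, (z i).val * (j i).val with hN
  rw [← Complex.exp_conj, ← Complex.exp_add]
  rw [show (starRingEnd ℂ) (2 * Real.pi * Complex.I * (N : ℂ) / d)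
      = -(2 * Real.pi * Complex.I * (N : ℂ) / d) by
    rw [map_div₀, _root_.map_mul, _root_.map_mul, _root_.map_mul, Complex.conj_I,
      map_natCast, map_natCast, map_ofNat, Complex.conj_ofReal]
    ring]
  rw [neg_add_cancel, Complex.exp_zero]

lemma chi_mul_conj (z j : QIdx d n) : chi d n z j * (starRingEnd ℂ) (chi d n z j) = 1 := by
  rw [mul_comm]; exact conj_chi_mul z j

lemma WX_mul (x y : QIdx d n) : WX d n x * WX d n y = WX d n (x + y) := by
  ext i j
  simp only [WX, Matrix.mul_apply, Matrix.of_apply]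
  rw [Finset.sum_eq_single (j + y)]
  · have hh : j + y + x = j + (x + y) := by abel
    simp [hh]
  · intro c _ hc
    simp [hc]
  · simp

lemma WX_conjT (x : QIdx d n) : (WX d n x)ᴴ = WX d n (-x) := by
  ext i j
  simp only [WX, Matrix.conjTranspose_apply, Matrix.of_apply]
  by_cases h : j = i + x
  · simp [h]
  · have h2 : ¬ i = j + (-x) := by
      intro hh; apply h; rw [hh]; abel
    simp [h, h2]

lemma WX_zero : WX d n 0 = 1 := by
  ext i j
  simp [WX, Matrix.one_apply, eq_comm]

lemma WZ_mul (z w : QIdx d n) : WZ d n z * WZ d n w = WZ d n (z + w) := by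
  simp [WZ, Matrix.diagonal_mul_diagonal, ← chi_add_left]

lemma WZ_conjT_mul (z : QIdx d n) : (WZ d n z)ᴴ * WZ d n z = 1 := by
  ext i j
  simp only [WZ, Matrix.diagonal_conjTranspose, Matrix.diagonal_mul_diagonal,
    Matrix.diagonal_apply, Matrix.one_apply, Pi.star_apply]
  by_cases h : i = j
  · subst h
    simp only [if_pos rfl]
    exact conj_chi_mul z i
  · simp [h]

lemma WX_conjT_mul (x : QIdx d n) : (WX d n x)ᴴ * WX d n x = 1 := by
  rw [WX_conjT, WX_mul, neg_add_cancel, WX_zero]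

lemma trace_conj_WX (x : QIdx d n) (ρ : QMat d n) : (WX d n x * ρ * (WX d n x)ᴴ).trace = ρ.trace := by
  rw [Matrix.trace_mul_cycle, WX_conjT_mul, Matrix.one_mul]

lemma trace_conj_WZ (z : QIdx d n) (ρ : QMat d n) : (WZ d n z * ρ * (WZ d n z)ᴴ).trace = ρ.trace := by
  rw [Matrix.trace_mul_cycle, WZ_conjT_mul, Matrix.one_mul]

lemma WZ_mul_WX (z x : QIdx d n) : WZ d n z * WX d n x = chi d n z x • (WX d n x * WZ d n z) := by
  ext i j
  simp only [WZ, WX, Matrix.diagonal_mul, Matrix.mul_diagonal, Matrix.smul_apply, Matrix.of_apply,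
    smul_eq_mul]
  by_cases h : i = j + x
  · subst h
    simp [chi_add_right, mul_comm]
  · simp [h]

lemma conjZ_conjZ (b a : QIdx d n) (σ : QMat d n) :
    WZ d n b * (WZ d n a * σ * (WZ d n a)ᴴ) * (WZ d n b)ᴴ
      = WZ d n (b + a) * σ * (WZ d n (b + a))ᴴ := by
  rw [← WZ_mul, Matrix.conjTranspose_mul]
  simp only [Matrix.mul_assoc]

lemma conjX_conjX (x y : QIdx d n) (σ : QMat d n) :
    WX d n x * (WX d n y * σ * (WX d n y)ᴴ) * (WX d n x)ᴴ
      = WX d n (x + y) * σ * (WX d n (x + y))ᴴ := by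
  rw [← WX_mul, Matrix.conjTranspose_mul]
  simp only [Matrix.mul_assoc]

lemma conjX_conjZ (u a : QIdx d n) (σ : QMat d n) :
    WX d n u * (WZ d n a * σ * (WZ d n a)ᴴ) * (WX d n u)ᴴ
      = WZ d n a * (WX d n u * σ * (WX d n u)ᴴ) * (WZ d n a)ᴴ := by
  have h1 : WX d n u * (WZ d n a * σ * (WZ d n a)ᴴ) * (WX d n u)ᴴ
      = (WX d n u * WZ d n a) * σ * (WX d n u * WZ d n a)ᴴ := by
    rw [Matrix.conjTranspose_mul]
    simp only [Matrix.mul_assoc]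
  have h2 : WZ d n a * (WX d n u * σ * (WX d n u)ᴴ) * (WZ d n a)ᴴ
      = (WZ d n a * WX d n u) * σ * (WZ d n a * WX d n u)ᴴ := by
    rw [Matrix.conjTranspose_mul]
    simp only [Matrix.mul_assoc]
  rw [h1, h2, WZ_mul_WX]
  rw [Matrix.conjTranspose_smul, smul_mul_assoc, smul_mul_assoc, Matrix.mul_smul, smul_smul]
  rw [mul_comm, Complex.star_def, conj_chi_mul, one_smul]

lemma chain_zero {α : Type*} (f : Fin 0 → α → α) (ρ : α) : chain f ρ = ρ := rfl

lemma chain_succ {α : Type*} {m : ℕ} (f : Fin (m+1) → α → α) (ρ : α) :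
    chain f ρ = chain (fun i => f i.succ) (f 0 ρ) := by
  simp [chain, List.ofFn_succ]

lemma foldl_linear (l : List (QMat d n →ₗ[ℂ] QMat d n)) (G : QMat d n →ₗ[ℂ] QMat d n)
    (ρ : QMat d n) :
    l.foldl (fun σ g => g σ) (G ρ) = (l.foldl (fun g h => h ∘ₗ g) G) ρ := by
  induction l generalizing G with
  | nil => rfl
  | cons h t ih =>
    simp only [List.foldl_cons]
    rw [← LinearMap.comp_apply, ih]

noncomputable def bigL {m : ℕ} (F : Fin m → (QMat d n →ₗ[ℂ] QMat d n)) :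
    QMat d n →ₗ[ℂ] QMat d n :=
  (List.ofFn F).foldl (fun g h => h ∘ₗ g) LinearMap.id

lemma chain_eq_bigL {m : ℕ} (F : Fin m → (QMat d n →ₗ[ℂ] QMat d n)) (ρ : QMat d n) :
    chain (fun i σ => F i σ) ρ = bigL F ρ := by
  have h0 : (List.ofFn fun i (σ : QMat d n) => F i σ) = List.map (fun g : QMat d n →ₗ[ℂ] QMat d n => ⇑g) (List.ofFn F) := by
    rw [List.map_ofFn]
    rfl
  rw [chain, h0, List.foldl_map]
  exact foldl_linear _ LinearMap.id ρ

lemma trace_chain_smul {m : ℕ} (F : Fin m → (QMat d n →ₗ[ℂ] QMat d n)) (c : ℂ) (ρ : QMat d n) :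
    (chain (fun i σ => F i σ) (c • ρ)).trace = c * (chain (fun i σ => F i σ) ρ).trace := by
  rw [chain_eq_bigL, chain_eq_bigL, LinearMap.map_smul, Matrix.trace_smul, smul_eq_mul]

lemma trace_chain_sum {m : ℕ} {ι : Type*} (F : Fin m → (QMat d n →ₗ[ℂ] QMat d n))
    (s : Finset ι) (g : ι → QMat d n) :
    (chain (fun i σ => F i σ) (∑ x ∈ s, g x)).trace
      = ∑ x ∈ s, (chain (fun i σ => F i σ) (g x)).trace := by
  rw [chain_eq_bigL, _root_.map_sum, Matrix.trace_sum]
  simp [chain_eq_bigL]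

noncomputable def rcL (M : QIdx d n → (QMat d n →ₗ[ℂ] QMat d n)) (k : QIdx d n) :
    QMat d n →ₗ[ℂ] QMat d n where
  toFun := rc d n M k
  map_add' ρ τ := by
    simp only [rc, Matrix.mul_add, Matrix.add_mul, map_add, Finset.sum_add_distrib, smul_add]
  map_smul' c ρ := by
    simp only [rc, RingHom.id_apply, mul_smul_comm, smul_mul_assoc, LinearMap.map_smul,
      Finset.smul_sum, smul_comm c]

lemma rc_eq_rcL (M : QIdx d n → (QMat d n →ₗ[ℂ] QMat d n)) (k : QIdx d n) (ρ : QMat d n) :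
    rc d n M k ρ = rcL M k ρ := rfl

lemma card_QIdx : (Fintype.card (QIdx d n) : ℂ) = (d : ℂ) ^ n := by
  simp [Fintype.card_fun, ZMod.card]

lemma sum_pi_succ {m : ℕ} {A : Type*} [Fintype A] (f : (Fin (m+1) → A) → ℂ) :
    ∑ α' : Fin (m+1) → A, f α' = ∑ x : A, ∑ α : Fin m → A, f (Fin.cons x α) := by
  rw [← Fintype.sum_equiv (Fin.consEquiv (fun _ : Fin (m+1) => A))
    (fun p => f (Fin.cons p.1 p.2)) f (fun p => rfl), Fintype.sum_prod_type]

lemma sum_shift {A : Type*} [Fintype A] [AddCommGroup A] (a : A) (f : A → ℂ) :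
    ∑ b : A, f (b + a) = ∑ b : A, f b :=
  Fintype.sum_equiv (Equiv.addRight a) (fun b => f (b + a)) f (fun b => rfl)

lemma sum_comm_mid {A B C D : Type*} [Fintype A] [Fintype B] [Fintype C] [Fintype D]
    (f : A → B → C → D → ℂ) :
    ∑ x : A, ∑ b : B, ∑ α : C, ∑ β : D, f x b α β
      = ∑ x : A, ∑ α : C, ∑ b : B, ∑ β : D, f x b α β :=
  Finset.sum_congr rfl fun _ _ => Finset.sum_comm

lemma trace_chain_rc_smul (M : QIdx d n → (QMat d n →ₗ[ℂ] QMat d n)) {m : ℕ}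
    (kk : Fin m → QIdx d n) (c : ℂ) (ρ : QMat d n) :
    (chain (fun i σ => rc d n M (kk i) σ) (c • ρ)).trace
      = c * (chain (fun i σ => rc d n M (kk i) σ) ρ).trace :=
  trace_chain_smul (fun i => rcL M (kk i)) c ρ

lemma trace_chain_rc_sum (M : QIdx d n → (QMat d n →ₗ[ℂ] QMat d n)) {m : ℕ} {ι : Type*}
    (kk : Fin m → QIdx d n) (s : Finset ι) (g : ι → QMat d n) :
    (chain (fun i σ => rc d n M (kk i) σ) (∑ x ∈ s, g x)).trace
      = ∑ x ∈ s, (chain (fun i σ => rc d n M (kk i) σ) (g x)).trace :=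
  trace_chain_sum (fun i => rcL M (kk i)) s g

lemma aux_main (M : QIdx d n → (QMat d n →ₗ[ℂ] QMat d n)) :
    ∀ (m : ℕ) (k : Fin m → QIdx d n) (c a : QIdx d n) (σ : QMat d n),
    (chain (fun i σ => rc d n M (k i) σ)
        (WX d n c * (WZ d n a * σ * (WZ d n a)ᴴ) * (WX d n c)ᴴ)).trace
      = (1 / (d : ℂ) ^ (2 * n * m)) *
          ∑ α : Fin m → QIdx d n, ∑ β : Fin m → QIdx d n,
            (chain (fun i σ =>
                M (k i - α i)
                  (WZ d n (β i) *
                    (WX d n ((Fin.cons c α : Fin (m + 1) → QIdx d n) i.castSucc - α i) * σ *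
                      (WX d n ((Fin.cons c α : Fin (m + 1) → QIdx d n) i.castSucc - α i))ᴴ) *
                    (WZ d n (β i))ᴴ)) σ).trace := by
  intro m
  induction m with
  | zero =>
    intro k c a σ
    simp only [chain_zero]
    rw [trace_conj_WX, trace_conj_WZ]
    simp
  | succ m IH =>
    intro k c a σ
    -- abbreviations
    set σ₀ := WX d n c * (WZ d n a * σ * (WZ d n a)ᴴ) * (WX d n c)ᴴ with hσ₀
    -- inner conjugation rewriting
    have hinner : ∀ (b x : QIdx d n),
        WZ d n b * (WX d n (-x) * σ₀ * (WX d n (-x))ᴴ) * (WZ d n b)ᴴ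
          = WZ d n (b + a) * (WX d n (-x + c) * σ * (WX d n (-x + c))ᴴ) * (WZ d n (b + a))ᴴ := by
      intro b x
      rw [hσ₀, conjX_conjX, conjX_conjZ, conjZ_conjZ]
    rw [chain_succ]
    rw [show rc d n M (k 0) σ₀ = (1 / (d : ℂ) ^ (3 * n)) •
        ∑ a' : QIdx d n, ∑ b : QIdx d n, ∑ x : QIdx d n,
          WX d n x * WZ d n a' *
            (M (k 0 - x) (WZ d n b * (WX d n (-x) * σ₀ * (WX d n (-x))ᴴ) * (WZ d n b)ᴴ)) *
            (WZ d n a')ᴴ * (WX d n x)ᴴ from rfl]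
    rw [trace_chain_rc_smul M (fun i => k i.succ)]
    simp only [trace_chain_rc_sum M (fun i => k i.succ)]
    simp only [hinner]
    -- per-term application of the induction hypothesis
    have hterm : ∀ a' b x : QIdx d n,
        (chain (fun i σ => rc d n M (k i.succ) σ)
          (WX d n x * WZ d n a' *
            (M (k 0 - x) (WZ d n b * (WX d n (-x + c) * σ * (WX d n (-x + c))ᴴ) * (WZ d n b)ᴴ)) *
            (WZ d n a')ᴴ * (WX d n x)ᴴ)).trace
        = (1 / (d : ℂ) ^ (2 * n * m)) *
            ∑ α : Fin m → QIdx d n, ∑ β : Fin m → QIdx d n,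
              (chain (fun i σ =>
                  M (k i.succ - α i)
                    (WZ d n (β i) *
                      (WX d n ((Fin.cons x α : Fin (m + 1) → QIdx d n) i.castSucc - α i) * σ *
                        (WX d n ((Fin.cons x α : Fin (m + 1) → QIdx d n) i.castSucc - α i))ᴴ) *
                      (WZ d n (β i))ᴴ))
                (M (k 0 - x)
                  (WZ d n b * (WX d n (-x + c) * σ * (WX d n (-x + c))ᴴ) * (WZ d n b)ᴴ))).trace := by
      intro a' b x
      rw [show WX d n x * WZ d n a' *
            (M (k 0 - x) (WZ d n b * (WX d n (-x + c) * σ * (WX d n (-x + c))ᴴ) * (WZ d n b)ᴴ)) *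
            (WZ d n a')ᴴ * (WX d n x)ᴴ
          = WX d n x * (WZ d n a' *
            (M (k 0 - x) (WZ d n b * (WX d n (-x + c) * σ * (WX d n (-x + c))ᴴ) * (WZ d n b)ᴴ)) *
            (WZ d n a')ᴴ) * (WX d n x)ᴴ from by simp only [Matrix.mul_assoc]]
      exact IH (fun i => k i.succ) x a' _
    simp only [hterm]
    rw [Finset.sum_const, Finset.card_univ, nsmul_eq_mul, card_QIdx]
    rw [Finset.sum_comm]
    rw [show (∑ x : QIdx d n, ∑ b : QIdx d n,
        (1 / (d : ℂ) ^ (2 * n * m)) *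
          ∑ α : Fin m → QIdx d n, ∑ β : Fin m → QIdx d n,
            (chain (fun i σ =>
                M (k i.succ - α i)
                  (WZ d n (β i) *
                    (WX d n ((Fin.cons x α : Fin (m + 1) → QIdx d n) i.castSucc - α i) * σ *
                      (WX d n ((Fin.cons x α : Fin (m + 1) → QIdx d n) i.castSucc - α i))ᴴ) *
                    (WZ d n (β i))ᴴ))
              ((M (k 0 - x))
                (WZ d n (b + a) * (WX d n (-x + c) * σ * (WX d n (-x + c))ᴴ) *
                  (WZ d n (b + a))ᴴ))).trace)
      = ∑ x : QIdx d n, ∑ b : QIdx d n,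
        (1 / (d : ℂ) ^ (2 * n * m)) *
          ∑ α : Fin m → QIdx d n, ∑ β : Fin m → QIdx d n,
            (chain (fun i σ =>
                M (k i.succ - α i)
                  (WZ d n (β i) *
                    (WX d n ((Fin.cons x α : Fin (m + 1) → QIdx d n) i.castSucc - α i) * σ *
                      (WX d n ((Fin.cons x α : Fin (m + 1) → QIdx d n) i.castSucc - α i))ᴴ) *
                    (WZ d n (β i))ᴴ))
              ((M (k 0 - x))
                (WZ d n b * (WX d n (-x + c) * σ * (WX d n (-x + c))ᴴ) *
                  (WZ d n b)ᴴ))).trace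
      from Finset.sum_congr rfl fun x _ => sum_shift a (fun b =>
        (1 / (d : ℂ) ^ (2 * n * m)) *
          ∑ α : Fin m → QIdx d n, ∑ β : Fin m → QIdx d n,
            (chain (fun i σ =>
                M (k i.succ - α i)
                  (WZ d n (β i) *
                    (WX d n ((Fin.cons x α : Fin (m + 1) → QIdx d n) i.castSucc - α i) * σ *
                      (WX d n ((Fin.cons x α : Fin (m + 1) → QIdx d n) i.castSucc - α i))ᴴ) *
                    (WZ d n (β i))ᴴ))
              ((M (k 0 - x))
                (WZ d n b * (WX d n (-x + c) * σ * (WX d n (-x + c))ᴴ) *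
                  (WZ d n b)ᴴ))).trace)]
    simp only [← Finset.mul_sum]
    rw [sum_comm_mid]
    simp only [sum_pi_succ, chain_succ, Fin.cons_zero, Fin.cons_succ, Fin.castSucc_zero,
      ← Fin.succ_castSucc]
    simp only [sub_eq_neg_add]
    have hd : (d : ℂ) ≠ 0 := Nat.cast_ne_zero.mpr (NeZero.ne d)
    have hC : 1 / (d:ℂ)^(3*n) * (d:ℂ)^n * (1 / (d:ℂ)^(2*n*m)) = 1 / (d:ℂ)^(2*n*(m+1)) := by
      field_simp
      rw [← pow_add, ← pow_add]
      congr 1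
      ring
    rw [← mul_assoc, ← mul_assoc, hC]

lemma WZ_zero : WZ d n 0 = 1 := by
  have hchi : ∀ j : QIdx d n, chi d n 0 j = 1 := by
    intro j
    unfold chi
    simp
  ext i j
  simp [WZ, Matrix.diagonal_apply, Matrix.one_apply, hchi]


/-- For outcomes `k_1, …, k_m`, the average over all
`α_1, …, α_m, β_1, …, β_m ∈ (ℤ/dℤ)^n` (with `α_0 = 0`) of
`Tr[(M_{k_m−α_m} ∘ 𝒵^{β_m} ∘ 𝒳^{α_{m−1}−α_m}) ∘ ⋯ ∘ (M_{k_1−α_1} ∘ 𝒵^{β_1} ∘ 𝒳^{α_0−α_1})(ρ)]`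
equals `Tr[M̂_{k_m} ∘ ⋯ ∘ M̂_{k_1}(ρ)]`. -/
theorem benchmarking_probability_eq_rc_power
    (d n : ℕ) [NeZero d] (hd : 2 ≤ d) (hn : 1 ≤ n)
    (M : QIdx d n → (QMat d n →ₗ[ℂ] QMat d n))
    (m : ℕ) (hm : 1 ≤ m) (k : Fin m → QIdx d n) (ρ : QMat d n) :
    (1 / (d : ℂ) ^ (2 * n * m)) *
      ∑ α : Fin m → QIdx d n, ∑ β : Fin m → QIdx d n,
        (chain (fun i σ =>
            M (k i - α i)
              (WZ d n (β i) *
                (WX d n ((Fin.cons 0 α : Fin (m + 1) → QIdx d n) i.castSucc - α i) * σ *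
                  (WX d n ((Fin.cons 0 α : Fin (m + 1) → QIdx d n) i.castSucc - α i))ᴴ) *
                (WZ d n (β i))ᴴ)) ρ).trace
      = (chain (fun i σ => rc d n M (k i) σ) ρ).trace := by
  have h := aux_main M m k 0 0 ρ
  rw [WX_zero, WZ_zero] at h
  simp only [Matrix.conjTranspose_one, Matrix.one_mul, Matrix.mul_one] at h
  exact h.symm
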